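/- Let H be a (deterministic) real symmetric N×N matrix with block decomposition H = [[A, B^*],[B, D]], where A is W×W. Suppose for some μ > 0 and C_0 > 0: (i) there do not exist e ∈ ℝ and u ∈ ℝ^{N−W} with ‖u‖ = 1, ‖B^*u‖ ≤ μ, and ‖(D − e)u‖ ≤ μ; and (ii) ‖A‖ + ‖B‖ + ‖D‖ ≤ C_0. Define G(z,z') = [[A − z, B^*],[B, D − z']]^{−1}. Then for any C'' > 0 there exists C' > 0, depending only on C'', μ, and C_0, such that for all z, z' ∈ ℂ with 0 < Im z, 0 ≤ Im z' ≤ Im z, and |z| + |z'| ≤ C'': ‖G(z,z')‖ ≤ C'/Im z. -/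

import Mathlib

/-!
Write `K = H - z J - z' J'` and split a unit vector as `w = (x, y)`. Since `H` is real symmetric,
`Im ⟪w, K w⟫ = -(Im z ‖x‖² + Im z' ‖y‖²)`, so `‖K w‖ ≥ Im z ‖x‖²` and `‖K w‖ ≥ Im z' ‖y‖²`.
If `x` is not small this already gives `‖K w‖ ≳ Im z`. Otherwise `‖y‖ ≥ 1/2`, and the two block
rows of `K w` show that `y` nearly solves `Bᵀ y = 0` and `(D - Re z') y = 0`, with an error of
order `‖K w‖ + ‖x‖` (the term `Im z' ‖y‖` is at most `2 ‖K w‖`). Applied to the real and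
imaginary parts of `y`, hypothesis (i) then forces `‖K w‖ ≳ μ`. Hence
`‖K w‖ ≥ c Im z ‖w‖` for all `w`, i.e. `‖K⁻¹‖ ≤ (c Im z)⁻¹`.
-/

open MeasureTheory ProbabilityTheory Matrix
open scoped ENNReal NNReal

noncomputable section

namespace RBM

/-- Euclidean norm of a real vector. -/
def vnorm {n : ℕ} (v : Fin n → ℝ) : ℝ := Real.sqrt (∑ i, (v i) ^ 2)

/-- Euclidean norm of a complex vector. -/
def cvnorm {n : ℕ} (v : Fin n → ℂ) : ℝ := Real.sqrt (∑ i, ‖v i‖ ^ 2)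

/-- Operator (ℓ² → ℓ²) norm of a real matrix. -/
def opNorm {m n : ℕ} (M : Matrix (Fin m) (Fin n) ℝ) : ℝ :=
  ⨆ v : {v : Fin n → ℝ // vnorm v ≤ 1}, vnorm (M.mulVec v)

/-- Operator (ℓ² → ℓ²) norm of a complex matrix. -/
def copNorm {m n : ℕ} (M : Matrix (Fin m) (Fin n) ℂ) : ℝ :=
  ⨆ v : {v : Fin n → ℂ // cvnorm v ≤ 1}, cvnorm (M.mulVec v)

/-- Periodic distance mod `N`. -/
def pdist (N : ℕ) (i j : Fin N) : ℕ :=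
  min ((i.val + N - j.val) % N) ((j.val + N - i.val) % N)

/-- Nondecreasingly ordered eigenvalues of a real symmetric matrix (junk value otherwise). -/
def sortedEigs {n : ℕ} (M : Matrix (Fin n) (Fin n) ℝ) : Fin n → ℝ :=
  if h : M.IsHermitian then h.eigenvalues ∘ ⇑(Tuple.sort h.eigenvalues) else 0

/-- `k`-th ordered eigenvalue, `1`-based indexing. -/
def eigv {n : ℕ} (M : Matrix (Fin n) (Fin n) ℝ) (k : ℕ) : ℝ :=
  if h : k - 1 < n then sortedEigs M ⟨k - 1, h⟩ else 0

/-- Orthonormal eigenvectors, ordered consistently with `sortedEigs`. -/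
def sortedEigvec {n : ℕ} (M : Matrix (Fin n) (Fin n) ℝ) : Fin n → EuclideanSpace ℝ (Fin n) :=
  if h : M.IsHermitian then fun k => h.eigenvectorBasis (Tuple.sort h.eigenvalues k) else 0

/-- `i`-th entry of the `k`-th ordered eigenvector, both `1`-based. -/
def eigvecEntry {n : ℕ} (M : Matrix (Fin n) (Fin n) ℝ) (k i : ℕ) : ℝ :=
  if hk : k - 1 < n then if hi : i - 1 < n then sortedEigvec M ⟨k - 1, hk⟩ ⟨i - 1, hi⟩
    else 0 else 0

/-- Semicircle density. -/
def rhoSC (x : ℝ) : ℝ := Real.sqrt (max (4 - x ^ 2) 0) / (2 * Real.pi)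

/-- Classical location of the `k`-th eigenvalue. -/
def gammaLoc (N k : ℕ) : ℝ :=
  sInf {x : ℝ | (k : ℝ) / N ≤ ∫ t in Set.Iic x, rhoSC t}

/-- Entry of a matrix by natural-number indices (0-based), junk value out of range. -/
def entry {N : ℕ} (M : Matrix (Fin N) (Fin N) ℝ) (r c : ℕ) : ℝ :=
  if h : r < N ∧ c < N then M ⟨r, h.1⟩ ⟨c, h.2⟩ else 0

/-- Square sub-block of size `w` with offset `a` on the diagonal. -/
def sqBlock {N : ℕ} (a w : ℕ) (M : Matrix (Fin N) (Fin N) ℝ) : Matrix (Fin w) (Fin w) ℝ :=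
  fun i j => entry M (a + i.val) (a + j.val)

/-- Rectangular sub-block with row offset `a` (height `w`) and column offset `b` (width `v`). -/
def rBlock {N : ℕ} (a w b v : ℕ) (M : Matrix (Fin N) (Fin N) ℝ) : Matrix (Fin w) (Fin v) ℝ :=
  fun i j => entry M (a + i.val) (b + j.val)

/-- Top left `W × W` block `A`. -/
def blockA (W : ℕ) {N : ℕ} (M : Matrix (Fin N) (Fin N) ℝ) : Matrix (Fin W) (Fin W) ℝ :=
  sqBlock 0 W M

/-- Lower left `(N-W) × W` block `B`. -/
def blockB (W : ℕ) {N : ℕ} (M : Matrix (Fin N) (Fin N) ℝ) : Matrix (Fin (N - W)) (Fin W) ℝ :=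
  rBlock W (N - W) 0 W M

/-- Lower right `(N-W) × (N-W)` block `D`. -/
def blockD (W : ℕ) {N : ℕ} (M : Matrix (Fin N) (Fin N) ℝ) :
    Matrix (Fin (N - W)) (Fin (N - W)) ℝ :=
  sqBlock W (N - W) M

/-- The mean-field reduction matrix `Q_e = A - Bᵀ (D - e)⁻¹ B`. -/
def Qmat (W : ℕ) {N : ℕ} (M : Matrix (Fin N) (Fin N) ℝ) (e : ℝ) : Matrix (Fin W) (Fin W) ℝ :=
  blockA W M - (blockB W M)ᵀ * (blockD W M - e • 1)⁻¹ * blockB W M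

/-- Number of eigenvalues (with multiplicity) strictly below `e`. -/
def specCountBelow {n : ℕ} (M : Matrix (Fin n) (Fin n) ℝ) (e : ℝ) : ℕ :=
  {k : Fin n | sortedEigs M k < e}.ncard

/-- The curves `𝒞_k(e) = ξ_{k - 𝒩_D(e)}(e)`. -/
def curveC (W : ℕ) {N : ℕ} (M : Matrix (Fin N) (Fin N) ℝ) (k : ℕ) (e : ℝ) : ℝ :=
  eigv (Qmat W M e) (k - specCountBelow (blockD W M) e)

/-- Independence of the matrix entries, up to the symmetry constraint. -/
def IndepSymmEntries {N : ℕ} {Ω : Type} [MeasureSpace Ω]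
    (H : Ω → Matrix (Fin N) (Fin N) ℝ) : Prop :=
  iIndepFun
    (fun (q : {q : Fin N × Fin N // q.1.val ≤ q.2.val}) ω => H ω q.1.1 q.1.2) ℙ

/-- The random band matrix ensemble of band width `4W-1`, `N = 2pW`. -/
def IsBandEnsemble (p W N : ℕ) (δ Cδ : ℝ) {Ω : Type} [MeasureSpace Ω]
    (H : Ω → Matrix (Fin N) (Fin N) ℝ) : Prop :=
  N = 2 * p * W ∧ 1 ≤ p ∧ 1 ≤ W ∧
  (∀ ω, (H ω).IsHermitian) ∧
  (∀ i j, Measurable fun ω => H ω i j) ∧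
  IndepSymmEntries H ∧
  (∀ i j, ∫ ω, H ω i j = 0) ∧
  (∀ i j, 2 * W < pdist N i j → ∀ ω, H ω i j = 0) ∧
  (∀ i j, pdist N i j ≤ 2 * W → ∫ ω, (H ω i j) ^ 2 = 1 / (4 * W - 1)) ∧
  (∀ i j, ∫ ω, Real.exp (δ * W * (H ω i j) ^ 2) ≤ Cδ)

/-- Gaussian entries (inside the band) with the band normalization. -/
def HasGaussianBandEntries (W N : ℕ) {Ω : Type} [MeasureSpace Ω]
    (H : Ω → Matrix (Fin N) (Fin N) ℝ) : Prop :=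
  ∀ i j : Fin N, pdist N i j ≤ 2 * W →
    Measure.map (fun ω => H ω i j) ℙ = gaussianReal 0 (1 / (4 * W - 1) : ℝ≥0)

/-- The Gaussian Orthogonal Ensemble `GOE_N` (variance `(1+δ_{ij})/N`). -/
def IsGOE (N : ℕ) {Ω : Type} [MeasureSpace Ω]
    (G : Ω → Matrix (Fin N) (Fin N) ℝ) : Prop :=
  (∀ ω, (G ω).IsHermitian) ∧
  (∀ i j, Measurable fun ω => G ω i j) ∧
  IndepSymmEntries G ∧
  (∀ i j : Fin N, Measure.map (fun ω => G ω i j) ℙ =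
    gaussianReal 0 (((1 + if i = j then 1 else 0) / N : ℝ≥0)))

/-- Mutual independence of the entries of two random matrices (up to symmetry within each). -/
def IndepSymmEntriesPair {N : ℕ} {Ω : Type} [MeasureSpace Ω]
    (H₁ H₂ : Ω → Matrix (Fin N) (Fin N) ℝ) : Prop :=
  iIndepFun
    (fun (q : {q : Fin N × Fin N // q.1.val ≤ q.2.val} ⊕ {q : Fin N × Fin N // q.1.val ≤ q.2.val})
      ω => match q with
        | Sum.inl q' => H₁ ω q'.1.1 q'.1.2
        | Sum.inr q' => H₂ ω q'.1.1 q'.1.2) ℙ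

/-- Gaussian divisible band matrix `H = √q H₁ + √(1-q) H₂`, `q = W^{-1+θ}`. -/
def IsGaussDivisible (p W N : ℕ) (δ Cδ θ : ℝ) {Ω : Type} [MeasureSpace Ω]
    (H H₁ H₂ : Ω → Matrix (Fin N) (Fin N) ℝ) : Prop :=
  IsBandEnsemble p W N δ Cδ H₁ ∧ IsBandEnsemble p W N δ Cδ H₂ ∧
  HasGaussianBandEntries W N H₁ ∧
  IndepSymmEntriesPair H₁ H₂ ∧
  (∀ ω, H ω = Real.sqrt ((W : ℝ) ^ (-1 + θ : ℝ)) • H₁ ω +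
      Real.sqrt (1 - (W : ℝ) ^ (-1 + θ : ℝ)) • H₂ ω)

/-- Stieltjes transform of the semicircle law (on the upper half plane). -/
def mSC (z : ℂ) : ℂ :=
  if 0 < ((-z + (z ^ 2 - 4) ^ (1/2 : ℂ)) / 2).im then (-z + (z ^ 2 - 4) ^ (1/2 : ℂ)) / 2
  else (-z - (z ^ 2 - 4) ^ (1/2 : ℂ)) / 2

/-- Diagonal projection onto the first `W` coordinates (as a complex matrix). -/
def Jmat (N W : ℕ) : Matrix (Fin N) (Fin N) ℂ :=
  Matrix.diagonal (fun i => if i.val < W then 1 else 0)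

/-- Diagonal projection onto the last `N - W` coordinates (as a complex matrix). -/
def Jmat' (N W : ℕ) : Matrix (Fin N) (Fin N) ℂ :=
  Matrix.diagonal (fun i => if W ≤ i.val then 1 else 0)

/-- Value of a vector `g : Fin N → ℝ` at a natural index (0-based), junk 0 out of range. -/
def gval {N : ℕ} (g : Fin N → ℝ) (i : ℕ) : ℝ := if h : i < N then g ⟨i, h⟩ else 0

section EuclideanNorms

variable {n : ℕ}

lemma vnorm_eq_norm (v : Fin n → ℝ) :
    vnorm v = ‖(WithLp.toLp 2 v : EuclideanSpace ℝ (Fin n))‖ := by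
  simp [vnorm, EuclideanSpace.norm_eq]

lemma cvnorm_eq_norm (v : Fin n → ℂ) :
    cvnorm v = ‖(WithLp.toLp 2 v : EuclideanSpace ℂ (Fin n))‖ := by
  simp [cvnorm, EuclideanSpace.norm_eq]

lemma vnorm_nonneg (v : Fin n → ℝ) : 0 ≤ vnorm v := Real.sqrt_nonneg _

lemma cvnorm_nonneg (v : Fin n → ℂ) : 0 ≤ cvnorm v := Real.sqrt_nonneg _

lemma vnorm_sq (v : Fin n → ℝ) : vnorm v ^ 2 = ∑ i, v i ^ 2 :=
  Real.sq_sqrt (Finset.sum_nonneg fun _ _ => sq_nonneg _)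

lemma cvnorm_sq (v : Fin n → ℂ) : cvnorm v ^ 2 = ∑ i, ‖v i‖ ^ 2 :=
  Real.sq_sqrt (Finset.sum_nonneg fun _ _ => sq_nonneg _)

lemma vnorm_smul (c : ℝ) (v : Fin n → ℝ) : vnorm (c • v) = |c| * vnorm v := by
  simp [vnorm_eq_norm, norm_smul]

lemma cvnorm_smul (c : ℂ) (v : Fin n → ℂ) : cvnorm (c • v) = ‖c‖ * cvnorm v := by
  simp [cvnorm_eq_norm, norm_smul]

lemma vnorm_eq_zero {v : Fin n → ℝ} : vnorm v = 0 ↔ v = 0 := by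
  simp [vnorm_eq_norm]

lemma cvnorm_eq_zero {v : Fin n → ℂ} : cvnorm v = 0 ↔ v = 0 := by
  simp [cvnorm_eq_norm]

lemma cvnorm_add_le (v w : Fin n → ℂ) : cvnorm (v + w) ≤ cvnorm v + cvnorm w := by
  simpa [cvnorm_eq_norm] using
    norm_add_le (WithLp.toLp 2 v : EuclideanSpace ℂ (Fin n)) (WithLp.toLp 2 w)

lemma cvnorm_sub_le (v w : Fin n → ℂ) : cvnorm (v - w) ≤ cvnorm v + cvnorm w := by
  simpa [cvnorm_eq_norm] using
    norm_sub_le (WithLp.toLp 2 v : EuclideanSpace ℂ (Fin n)) (WithLp.toLp 2 w)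

lemma norm_star_dotProduct_le (v w : Fin n → ℂ) : ‖star v ⬝ᵥ w‖ ≤ cvnorm v * cvnorm w := by
  simpa [cvnorm_eq_norm, EuclideanSpace.inner_toLp_toLp, dotProduct_comm] using
    norm_inner_le_norm (𝕜 := ℂ) (WithLp.toLp 2 v : EuclideanSpace ℂ (Fin n)) (WithLp.toLp 2 w)

lemma star_dotProduct_self (v : Fin n → ℂ) : star v ⬝ᵥ v = ((cvnorm v ^ 2 : ℝ) : ℂ) := by
  have h := inner_self_eq_norm_sq_to_K (𝕜 := ℂ) (WithLp.toLp 2 v : EuclideanSpace ℂ (Fin n))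
  rw [EuclideanSpace.inner_toLp_toLp, ← cvnorm_eq_norm] at h
  rw [dotProduct_comm, h]
  push_cast
  rfl

lemma cvnorm_sq_eq_re_add_im (v : Fin n → ℂ) :
    cvnorm v ^ 2 = vnorm (fun i => (v i).re) ^ 2 + vnorm (fun i => (v i).im) ^ 2 := by
  rw [cvnorm_sq, vnorm_sq, vnorm_sq, ← Finset.sum_add_distrib]
  refine Finset.sum_congr rfl fun i _ => ?_
  rw [Complex.sq_norm, Complex.normSq_apply]
  ring

lemma cvnorm_sq_eq_add_of_equiv {p q : ℕ} (e : Fin p ⊕ Fin q ≃ Fin n) (v : Fin n → ℂ) :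
    cvnorm v ^ 2 = cvnorm ((v ∘ e) ∘ Sum.inl) ^ 2 + cvnorm ((v ∘ e) ∘ Sum.inr) ^ 2 := by
  simp only [cvnorm_sq, ← Equiv.sum_comp e, Fintype.sum_sum_type, Function.comp_apply]

end EuclideanNorms

section OperatorNorms

variable {m n : ℕ}

lemma opNorm_bddAbove (R : Matrix (Fin m) (Fin n) ℝ) :
    BddAbove (Set.range fun v : {v : Fin n → ℝ // vnorm v ≤ 1} => vnorm (R *ᵥ v)) := by
  let T := (toLpLin 2 2 R).toContinuousLinearMap
  refine ⟨‖T‖, ?_⟩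
  rintro _ ⟨⟨v, hv⟩, rfl⟩
  change vnorm (R *ᵥ v) ≤ ‖T‖
  rw [vnorm_eq_norm] at hv ⊢
  calc ‖(WithLp.toLp 2 (R *ᵥ v) : EuclideanSpace ℝ (Fin m))‖ = ‖T (WithLp.toLp 2 v)‖ := rfl
    _ ≤ ‖T‖ * ‖(WithLp.toLp 2 v : EuclideanSpace ℝ (Fin n))‖ := T.le_opNorm _
    _ ≤ ‖T‖ := mul_le_of_le_one_right (norm_nonneg T) hv

lemma opNorm_nonneg (R : Matrix (Fin m) (Fin n) ℝ) : 0 ≤ opNorm R :=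
  Real.iSup_nonneg fun _ => vnorm_nonneg _

lemma vnorm_mulVec_le (R : Matrix (Fin m) (Fin n) ℝ) (u : Fin n → ℝ) :
    vnorm (R *ᵥ u) ≤ opNorm R * vnorm u := by
  rcases (vnorm_nonneg u).eq_or_lt with hu | hu
  · rw [← hu, vnorm_eq_zero.mp hu.symm, mulVec_zero, mul_zero, vnorm_eq_zero.mpr rfl]
  · have hunit : vnorm ((vnorm u)⁻¹ • u) ≤ 1 := by
      rw [vnorm_smul, abs_of_pos (inv_pos.mpr hu), inv_mul_cancel₀ hu.ne']
    have h := le_ciSup (opNorm_bddAbove R) ⟨_, hunit⟩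
    rw [mulVec_smul, vnorm_smul, abs_of_pos (inv_pos.mpr hu), inv_mul_le_iff₀ hu] at h
    exact h.trans_eq (mul_comm _ _)

lemma map_ofReal_mulVec_apply (R : Matrix (Fin m) (Fin n) ℝ) (x : Fin n → ℂ) (i : Fin m) :
    (R.map (↑) *ᵥ x) i = ⟨(R *ᵥ fun j => (x j).re) i, (R *ᵥ fun j => (x j).im) i⟩ := by
  apply Complex.ext <;> simp [mulVec, dotProduct, Complex.re_sum, Complex.im_sum]

lemma cvnorm_map_ofReal_mulVec_sq (R : Matrix (Fin m) (Fin n) ℝ) (x : Fin n → ℂ) :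
    cvnorm (R.map (↑) *ᵥ x) ^ 2 =
      vnorm (R *ᵥ fun j => (x j).re) ^ 2 + vnorm (R *ᵥ fun j => (x j).im) ^ 2 := by
  simp only [cvnorm_sq_eq_re_add_im, map_ofReal_mulVec_apply]

lemma cvnorm_map_ofReal_mulVec_le (R : Matrix (Fin m) (Fin n) ℝ) (x : Fin n → ℂ) :
    cvnorm (R.map (↑) *ᵥ x) ≤ opNorm R * cvnorm x := by
  rw [← pow_le_pow_iff_left₀ (cvnorm_nonneg _)
      (mul_nonneg (opNorm_nonneg R) (cvnorm_nonneg x)) two_ne_zero,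
    cvnorm_map_ofReal_mulVec_sq, mul_pow, cvnorm_sq_eq_re_add_im, mul_add, ← mul_pow, ← mul_pow]
  exact add_le_add (pow_le_pow_left₀ (vnorm_nonneg _) (vnorm_mulVec_le R _) 2)
    (pow_le_pow_left₀ (vnorm_nonneg _) (vnorm_mulVec_le R _) 2)

end OperatorNorms

section LowerBounds

variable {m n : ℕ}

lemma mul_cvnorm_le_of_unit {K : Matrix (Fin m) (Fin n) ℂ} {c : ℝ}
    (h : ∀ w, cvnorm w = 1 → c ≤ cvnorm (K *ᵥ w)) (v : Fin n → ℂ) :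
    c * cvnorm v ≤ cvnorm (K *ᵥ v) := by
  rcases (cvnorm_nonneg v).eq_or_lt with hv | hv
  · rw [← hv, mul_zero]
    exact cvnorm_nonneg _
  · have hw : cvnorm (((cvnorm v)⁻¹ : ℂ) • v) = 1 := by
      rw [cvnorm_smul, ← Complex.ofReal_inv, Complex.norm_real, Real.norm_of_nonneg
        (inv_nonneg.mpr hv.le), inv_mul_cancel₀ hv.ne']
    have h := h _ hw
    rw [mulVec_smul, cvnorm_smul, ← Complex.ofReal_inv, Complex.norm_real, Real.norm_of_nonneg
      (inv_nonneg.mpr hv.le), le_inv_mul_iff₀ hv] at h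
    exact h.trans_eq' (mul_comm _ _)

lemma copNorm_inv_le {K : Matrix (Fin n) (Fin n) ℂ} {c : ℝ} (hc : 0 < c)
    (h : ∀ v, c * cvnorm v ≤ cvnorm (K *ᵥ v)) : copNorm K⁻¹ ≤ c⁻¹ := by
  have hK : IsUnit K.det := by
    refine isUnit_iff_ne_zero.mpr fun hdet => ?_
    obtain ⟨v, hv, hKv⟩ := exists_mulVec_eq_zero_iff.mpr hdet
    have := h v
    rw [hKv, cvnorm_eq_zero.mpr rfl] at this
    exact hv (cvnorm_eq_zero.mp (le_antisymm (nonpos_of_mul_nonpos_right this hc)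
      (cvnorm_nonneg v)))
  refine Real.iSup_le (fun ⟨v, hv⟩ => ?_) (inv_nonneg.mpr hc.le)
  have := h (K⁻¹ *ᵥ v)
  rw [mulVec_mulVec, mul_nonsing_inv K hK, one_mulVec] at this
  change cvnorm (K⁻¹ *ᵥ v) ≤ c⁻¹
  rw [← one_div c, le_div_iff₀' hc]
  exact this.trans hv

end LowerBounds

section SpectralGap

variable {m n k : ℕ} {μ : ℝ} {R₁ : Matrix (Fin m) (Fin n) ℝ} {R₂ : Matrix (Fin k) (Fin n) ℝ}

lemma mul_vnorm_le_max_of_not_exists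
    (h : ¬ ∃ u, vnorm u = 1 ∧ vnorm (R₁ *ᵥ u) ≤ μ ∧ vnorm (R₂ *ᵥ u) ≤ μ) (u : Fin n → ℝ) :
    μ * vnorm u ≤ max (vnorm (R₁ *ᵥ u)) (vnorm (R₂ *ᵥ u)) := by
  rcases (vnorm_nonneg u).eq_or_lt with hu | hu
  · rw [← hu, mul_zero]
    exact (vnorm_nonneg _).trans (le_max_left _ _)
  · by_contra! hlt
    rw [max_lt_iff] at hlt
    have hscale : ∀ {l} (R : Matrix (Fin l) (Fin n) ℝ), vnorm (R *ᵥ u) < μ * vnorm u →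
        vnorm (R *ᵥ (vnorm u)⁻¹ • u) ≤ μ := fun R hR => by
      rw [mulVec_smul, vnorm_smul, abs_of_pos (inv_pos.mpr hu), inv_mul_le_iff₀ hu]
      linarith
    refine h ⟨(vnorm u)⁻¹ • u, ?_, hscale R₁ hlt.1, hscale R₂ hlt.2⟩
    rw [vnorm_smul, abs_of_pos (inv_pos.mpr hu), inv_mul_cancel₀ hu.ne']

lemma mul_cvnorm_le_add_of_real (hμ : 0 ≤ μ)
    (h : ∀ u, μ * vnorm u ≤ max (vnorm (R₁ *ᵥ u)) (vnorm (R₂ *ᵥ u))) (y : Fin n → ℂ) :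
    μ * cvnorm y ≤ cvnorm (R₁.map (↑) *ᵥ y) + cvnorm (R₂.map (↑) *ᵥ y) := by
  have hsq : ∀ u, (μ * vnorm u) ^ 2 ≤ vnorm (R₁ *ᵥ u) ^ 2 + vnorm (R₂ *ᵥ u) ^ 2 := fun u => by
    have h0 := mul_nonneg hμ (vnorm_nonneg u)
    rcases le_max_iff.mp (h u) with h1 | h1 <;>
      nlinarith [sq_nonneg (vnorm (R₁ *ᵥ u)), sq_nonneg (vnorm (R₂ *ᵥ u))]
  have hre := hsq fun j => (y j).re
  have him := hsq fun j => (y j).im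
  rw [← pow_le_pow_iff_left₀ (mul_nonneg hμ (cvnorm_nonneg y))
      (add_nonneg (cvnorm_nonneg _) (cvnorm_nonneg _)) two_ne_zero,
    mul_pow, cvnorm_sq_eq_re_add_im, add_sq, cvnorm_map_ofReal_mulVec_sq,
    cvnorm_map_ofReal_mulVec_sq]
  nlinarith [mul_nonneg (cvnorm_nonneg (R₁.map (↑) *ᵥ y)) (cvnorm_nonneg (R₂.map (↑) *ᵥ y))]

end SpectralGap

/- If `Y < 1/2` the pairing bound alone suffices. Otherwise `b Y ≤ 2 s`, and the gap inequality
forces either `s ≥ μ / 16` or `X ≥ t`. -/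
lemma mul_sq_div_four_le_of_gap {a b X Y s μ C t : ℝ} (ha : 0 < a) (haC : a ≤ C) (hb : 0 ≤ b)
    (hY : 0 ≤ Y) (hXY : X ^ 2 + Y ^ 2 = 1) (ht0 : 0 ≤ t) (ht1 : t ≤ 1)
    (htμ : 4 * C * t ≤ μ) (hpair : a * X ^ 2 + b * Y ^ 2 ≤ s)
    (hgap : μ * Y ≤ 2 * s + C * X + b * Y) :
    a * t ^ 2 / 4 ≤ s := by
  have hC : 0 < C := ha.trans_le haC
  have hμ : 0 ≤ μ := (mul_nonneg (by positivity) ht0).trans htμ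
  have ht2 : t ^ 2 ≤ 1 := pow_le_one₀ ht0 ht1
  have haX2 : a * X ^ 2 ≤ s := by nlinarith [mul_nonneg hb (sq_nonneg Y)]
  rcases lt_or_ge Y (1 / 2) with hYsmall | hYlarge
  · have hX2 : 3 / 4 ≤ X ^ 2 := by nlinarith
    nlinarith
  have hbY : b * Y ≤ 2 * s := by nlinarith [mul_nonneg ha.le (sq_nonneg X), mul_nonneg hb hY]
  have hμs : μ / 2 ≤ 4 * s + C * X := by nlinarith [mul_le_mul_of_nonneg_left hYlarge hμ]
  rcases le_or_gt (μ / 16) s with hs | hs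
  · nlinarith [mul_nonneg ha.le ht0]
  have hXt : t ≤ X := by
    by_contra! hXt
    nlinarith [mul_lt_mul_of_pos_left hXt hC]
  nlinarith [pow_le_pow_left₀ ht0 hXt 2]

section Blocks

variable {p q : ℕ} (A : Matrix (Fin p) (Fin p) ℝ) (B : Matrix (Fin q) (Fin p) ℝ)
  (D : Matrix (Fin q) (Fin q) ℝ) (z z' : ℂ)

/-- Block form of `H - z J - z' J'`. -/
def shiftedBlocks : Matrix (Fin p ⊕ Fin q) (Fin p ⊕ Fin q) ℂ :=
  fromBlocks (A.map (↑) - z • 1) (Bᵀ.map (↑)) (B.map (↑)) (D.map (↑) - z' • 1)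

lemma shiftedBlocks_eq_sub :
    shiftedBlocks A B D z z' = (fromBlocks A Bᵀ B D).map (↑) - fromBlocks (z • 1) 0 0 (z' • 1) := by
  ext (i | i) (j | j) <;> simp [shiftedBlocks]

lemma im_star_dotProduct_shiftedBlocks_mulVec (hA : A.IsHermitian) (hD : D.IsHermitian)
    (x : Fin p → ℂ) (y : Fin q → ℂ) :
    (star (Sum.elim x y) ⬝ᵥ shiftedBlocks A B D z z' *ᵥ Sum.elim x y).im =
      -(z.im * cvnorm x ^ 2 + z'.im * cvnorm y ^ 2) := by
  have hH : ((fromBlocks A Bᵀ B D).map ((↑) : ℝ → ℂ)).IsHermitian :=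
    (hA.fromBlocks (conjTranspose_eq_transpose_of_trivial _) hD).map _ fun r => by simp
  rw [shiftedBlocks_eq_sub, sub_mulVec, dotProduct_sub, Complex.sub_im,
    ← RCLike.im_to_complex, hH.im_star_dotProduct_mulVec_self, fromBlocks_mulVec, dotProduct_block]
  have hinl : star (Sum.elim x y) ∘ Sum.inl = star x := rfl
  have hinr : star (Sum.elim x y) ∘ Sum.inr = star y := rfl
  simp only [hinl, hinr, Sum.elim_comp_inl, Sum.elim_comp_inr, smul_mulVec, one_mulVec,
    zero_mulVec, add_zero, zero_add, dotProduct_smul, star_dotProduct_self, smul_eq_mul,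
    Complex.add_im, Complex.mul_im, Complex.ofReal_re, Complex.ofReal_im]
  ring

lemma cvnorm_transpose_mulVec_le (x : Fin p → ℂ) (y : Fin q → ℂ) :
    cvnorm (Bᵀ.map (↑) *ᵥ y) ≤ cvnorm ((shiftedBlocks A B D z z' *ᵥ Sum.elim x y) ∘ Sum.inl) +
      (opNorm A + ‖z‖) * cvnorm x := by
  have hrow : Bᵀ.map (↑) *ᵥ y = (shiftedBlocks A B D z z' *ᵥ Sum.elim x y) ∘ Sum.inl -
      (A.map (↑) *ᵥ x - z • x) := by
    simp only [shiftedBlocks, fromBlocks_mulVec, Sum.elim_comp_inl, Sum.elim_comp_inr,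
      sub_mulVec, smul_mulVec, one_mulVec]
    abel
  rw [hrow, add_mul]
  refine (cvnorm_sub_le _ _).trans (add_le_add le_rfl ((cvnorm_sub_le _ _).trans ?_))
  rw [cvnorm_smul]
  exact add_le_add (cvnorm_map_ofReal_mulVec_le A x) le_rfl

lemma cvnorm_sub_re_smul_one_mulVec_le (x : Fin p → ℂ) (y : Fin q → ℂ) :
    cvnorm ((D - z'.re • 1).map (↑) *ᵥ y) ≤
      cvnorm ((shiftedBlocks A B D z z' *ᵥ Sum.elim x y) ∘ Sum.inr) + opNorm B * cvnorm x +
        |z'.im| * cvnorm y := by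
  have hrow : (D - z'.re • 1).map (↑) *ᵥ y = (shiftedBlocks A B D z z' *ᵥ Sum.elim x y) ∘ Sum.inr -
      B.map (↑) *ᵥ x + (z' - z'.re) • y := by
    have hD : (D - z'.re • 1).map (↑) *ᵥ y = D.map (↑) *ᵥ y - (z'.re : ℂ) • y := by
      simp [Matrix.map_sub, sub_mulVec, Matrix.map_smul, smul_mulVec]
    simp only [hD, shiftedBlocks, fromBlocks_mulVec, Sum.elim_comp_inl, Sum.elim_comp_inr,
      sub_mulVec, smul_mulVec, one_mulVec, sub_smul]
    abel
  have hz' : ‖z' - z'.re‖ = |z'.im| := by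
    rw [show z' - z'.re = z'.im * Complex.I by apply Complex.ext <;> simp]
    simp
  rw [hrow]
  refine (cvnorm_add_le _ _).trans (add_le_add ((cvnorm_sub_le _ _).trans ?_) ?_)
  · exact add_le_add le_rfl (cvnorm_map_ofReal_mulVec_le B x)
  · rw [cvnorm_smul, hz']

variable {A B D z z'} in
theorem im_mul_sq_div_four_le_cvnorm_mulVec {n : ℕ} {K : Matrix (Fin n) (Fin n) ℂ}
    (e : Fin p ⊕ Fin q ≃ Fin n)
    (hK : K.submatrix e e = shiftedBlocks A B D z z') (hA : A.IsHermitian) (hD : D.IsHermitian)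
    {μ C₀ C'' t : ℝ}
    (hgap : ∀ (r : ℝ) (u : Fin q → ℝ),
      μ * vnorm u ≤ max (vnorm (Bᵀ *ᵥ u)) (vnorm ((D - r • 1) *ᵥ u)))
    (hAB : opNorm A + opNorm B ≤ C₀) (hz : 0 < z.im) (hz' : 0 ≤ z'.im) (hzC : ‖z‖ ≤ C'')
    (ht0 : 0 ≤ t) (ht1 : t ≤ 1) (htμ : 4 * (C₀ + C'') * t ≤ μ)
    (w : Fin n → ℂ) (hw : cvnorm w = 1) :
    z.im * t ^ 2 / 4 ≤ cvnorm (K *ᵥ w) := by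
  set x := (w ∘ e) ∘ Sum.inl
  set y := (w ∘ e) ∘ Sum.inr
  set s := cvnorm (K *ᵥ w)
  have hsplit : (K *ᵥ w) ∘ e = shiftedBlocks A B D z z' *ᵥ Sum.elim x y := by
    rw [← hK, Sum.elim_comp_inl_inr, submatrix_mulVec_equiv, Function.comp_assoc,
      Equiv.self_comp_symm, Function.comp_id]
  have hXY : cvnorm x ^ 2 + cvnorm y ^ 2 = 1 := by
    rw [← cvnorm_sq_eq_add_of_equiv, hw, one_pow]
  have hrows := cvnorm_sq_eq_add_of_equiv e (K *ᵥ w)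
  have htop : cvnorm ((shiftedBlocks A B D z z' *ᵥ Sum.elim x y) ∘ Sum.inl) ≤ s := by
    rw [← hsplit]
    nlinarith [cvnorm_nonneg (((K *ᵥ w) ∘ e) ∘ Sum.inl), cvnorm_nonneg (K *ᵥ w)]
  have hbot : cvnorm ((shiftedBlocks A B D z z' *ᵥ Sum.elim x y) ∘ Sum.inr) ≤ s := by
    rw [← hsplit]
    nlinarith [cvnorm_nonneg (((K *ᵥ w) ∘ e) ∘ Sum.inr), cvnorm_nonneg (K *ᵥ w)]
  have hpair : z.im * cvnorm x ^ 2 + z'.im * cvnorm y ^ 2 ≤ s := by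
    have h := im_star_dotProduct_shiftedBlocks_mulVec A B D z z' hA hD x y
    rw [← hsplit, Sum.elim_comp_inl_inr, show star (w ∘ e) = star w ∘ e from rfl,
      comp_equiv_dotProduct_comp_equiv] at h
    have hCS := norm_star_dotProduct_le w (K *ᵥ w)
    rw [hw, one_mul] at hCS
    linarith [neg_le_abs (star w ⬝ᵥ K *ᵥ w).im, Complex.abs_im_le_norm (star w ⬝ᵥ K *ᵥ w)]
  have hC₀ : 0 ≤ C₀ := (add_nonneg (opNorm_nonneg A) (opNorm_nonneg B)).trans hAB
  have hzC' : z.im ≤ C₀ + C'' := by linarith [Complex.im_le_norm z]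
  have hμ : 0 ≤ μ := (mul_nonneg (by linarith) ht0).trans htμ
  have hgapC := mul_cvnorm_le_add_of_real hμ (hgap z'.re) y
  have hrowB := cvnorm_transpose_mulVec_le A B D z z' x y
  have hrowD := cvnorm_sub_re_smul_one_mulVec_le A B D z z' x y
  rw [abs_of_nonneg hz'] at hrowD
  refine mul_sq_div_four_le_of_gap hz hzC' hz' (cvnorm_nonneg y) hXY ht0 ht1 htμ hpair ?_
  have hX := cvnorm_nonneg x
  nlinarith [mul_le_mul_of_nonneg_right hAB hX, mul_le_mul_of_nonneg_right hzC hX]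

end Blocks

section Split

variable {N W : ℕ}

def splitFin (hWN : W ≤ N) : Fin W ⊕ Fin (N - W) ≃ Fin N :=
  finSumFinEquiv.trans (finCongr (Nat.add_sub_cancel' hWN))

lemma splitFin_inl_val (hWN : W ≤ N) (i : Fin W) : (splitFin hWN (Sum.inl i) : ℕ) = i := rfl

lemma splitFin_inr_val (hWN : W ≤ N) (j : Fin (N - W)) :
    (splitFin hWN (Sum.inr j) : ℕ) = W + j := rfl

lemma entry_val (M : Matrix (Fin N) (Fin N) ℝ) (i j : Fin N) : entry M i j = M i j := by
  simp [entry]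

lemma submatrix_splitFin (hWN : W ≤ N) (M : Matrix (Fin N) (Fin N) ℝ) (hM : M.IsHermitian) :
    M.submatrix (splitFin hWN) (splitFin hWN) =
      fromBlocks (blockA W M) (blockB W M)ᵀ (blockB W M) (blockD W M) := by
  ext (i | i) (j | j) <;>
    simp only [submatrix_apply, fromBlocks_apply₁₁, fromBlocks_apply₁₂, fromBlocks_apply₂₁,
      fromBlocks_apply₂₂, transpose_apply, blockA, blockB, blockD, sqBlock, rBlock, zero_add]
  · exact (entry_val M _ _).symm
  · rw [← hM.apply]
    exact (entry_val M _ _).symm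
  · exact (entry_val M _ _).symm
  · exact (entry_val M _ _).symm

lemma isHermitian_blockA_blockD (hWN : W ≤ N) {M : Matrix (Fin N) (Fin N) ℝ} (hM : M.IsHermitian) :
    (blockA W M).IsHermitian ∧ (blockD W M).IsHermitian := by
  have h := hM.submatrix (splitFin hWN)
  rw [submatrix_splitFin hWN M hM, isHermitian_fromBlocks_iff] at h
  exact ⟨h.1, h.2.2.2⟩

lemma resolvent_submatrix_splitFin (hWN : W ≤ N) (M : Matrix (Fin N) (Fin N) ℝ)
    (hM : M.IsHermitian) (z z' : ℂ) :
    (M.map (fun x : ℝ => (x : ℂ)) - z • Jmat N W - z' • Jmat' N W).submatrix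
        (splitFin hWN) (splitFin hWN) =
      shiftedBlocks (blockA W M) (blockB W M) (blockD W M) z z' := by
  rw [shiftedBlocks_eq_sub, ← submatrix_splitFin hWN M hM]
  ext (i | i) (j | j) <;>
    simp [Jmat, Jmat', diagonal_apply, one_apply, splitFin_inl_val, splitFin_inr_val,
      not_le.mpr i.isLt]

end Split

end RBM

/-- Deterministic bound on the generalized resolvent `G(z,z')`
(Lemma lem:obG). -/
theorem RBM.generalized_resolvent_bound
    (μ C₀ : ℝ) (hμ : 0 < μ) (hC₀ : 0 < C₀) :
    ∀ C'' > (0 : ℝ), ∃ C' > (0 : ℝ),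
    ∀ (N W : ℕ), W ≤ N → ∀ M : Matrix (Fin N) (Fin N) ℝ, M.IsHermitian →
    (¬ ∃ (e : ℝ) (u : Fin (N - W) → ℝ), RBM.vnorm u = 1 ∧
        RBM.vnorm ((RBM.blockB W M)ᵀ.mulVec u) ≤ μ ∧
        RBM.vnorm ((RBM.blockD W M - e • 1).mulVec u) ≤ μ) →
    RBM.opNorm (RBM.blockA W M) + RBM.opNorm (RBM.blockB W M) +
      RBM.opNorm (RBM.blockD W M) ≤ C₀ →
    ∀ z z' : ℂ, 0 < z.im → 0 ≤ z'.im → z'.im ≤ z.im →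
      ‖z‖ + ‖z'‖ ≤ C'' →
    RBM.copNorm ((M.map (fun x : ℝ => (x : ℂ)) - z • RBM.Jmat N W - z' • RBM.Jmat' N W)⁻¹) ≤
      C' / z.im := by
  intro C'' hC''
  set t := min 1 (μ / (4 * (C₀ + C'')))
  have ht0 : 0 < t := lt_min one_pos (by positivity)
  have htμ : 4 * (C₀ + C'') * t ≤ μ := (le_div_iff₀' (by positivity)).mp (min_le_right _ _)
  refine ⟨4 / t ^ 2, by positivity, ?_⟩
  intro N W hWN M hM hno hop z z' hz hz' _ hzz'
  obtain ⟨hA, hD⟩ := RBM.isHermitian_blockA_blockD hWN hM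
  have hunit := RBM.im_mul_sq_div_four_le_cvnorm_mulVec (RBM.splitFin hWN)
    (RBM.resolvent_submatrix_splitFin hWN M hM z z') hA hD
    (fun r => RBM.mul_vnorm_le_max_of_not_exists (not_exists.mp hno r))
    (by linarith [RBM.opNorm_nonneg (RBM.blockD W M)]) hz hz' (by linarith [norm_nonneg z'])
    ht0.le (min_le_left _ _) htμ
  calc _ ≤ (z.im * t ^ 2 / 4)⁻¹ :=
        RBM.copNorm_inv_le (by positivity) (RBM.mul_cvnorm_le_of_unit hunit)
    _ = 4 / t ^ 2 / z.im := by field_simp
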